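/- Let A ∈ Z^{t×(t+c-1)} be a degree matrix and s the degree of hp^A. Then the leading coefficient of hp^A equals binom(r+c-2, c-1), where r = max{i : a_{1,1} = a_{2,1} = ... = a_{i,1}} is the number of maximal equal rows of A. -/

import Mathlib

open Polynomial

/-- The polynomial `1 + z + ⋯ + z^(d-1)`. -/
noncomputable def geom (d : ℤ) : Polynomial ℤ :=
  ∑ i ∈ Finset.range d.toNat, Polynomial.X ^ i

/-- The h-polynomial of a standard determinantal ideal with `t × m` degree matrix `A`
(codimension `m - t + 1`), defined via the basic-double-link recursion applied at the
bottom-right entry, with the conventions `hp = 0` for `t = 0` and `hp = 1` for `m < t`. -/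
noncomputable def hp : (t m : ℕ) → Matrix (Fin t) (Fin m) ℤ → Polynomial ℤ
  | 0, _, _ => 0
  | _ + 1, 0, _ => 1
  | t + 1, m + 1, A =>
    if m + 1 ≤ t then 1
    else
      Polynomial.X ^ (A (Fin.last t) (Fin.last m)).toNat *
          hp t m (fun i j => A i.castSucc j.castSucc) +
        geom (A (Fin.last t) (Fin.last m)) * hp (t + 1) m (fun i j => A i j.castSucc)
  termination_by t m => (t, m)

/-- Delete row `k` and column `l` of a matrix. -/
def delRC {t m : ℕ} (A : Matrix (Fin (t + 1)) (Fin (m + 1)) ℤ)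
    (k : Fin (t + 1)) (l : Fin (m + 1)) : Matrix (Fin t) (Fin m) ℤ :=
  fun i j => A (k.succAbove i) (l.succAbove j)

/-- Delete column `l` of a matrix. -/
def delC {t m : ℕ} (A : Matrix (Fin t) (Fin (m + 1)) ℤ) (l : Fin (m + 1)) :
    Matrix (Fin t) (Fin m) ℤ :=
  fun i j => A i (l.succAbove j)

/-- `A` is a degree matrix: homogeneous (`a_{i,j} = b_j - a_i`), entries weakly increasing
left-to-right and bottom-to-top, and positive on the main diagonal. -/
def IsDegreeMatrix {a b : ℕ} (A : Matrix (Fin a) (Fin b) ℤ) : Prop :=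
  (∃ (α : Fin a → ℤ) (β : Fin b → ℤ), ∀ i j, A i j = β j - α i) ∧
    (∀ (i : Fin a) (j j' : Fin b), j ≤ j' → A i j ≤ A i j') ∧
    (∀ (i i' : Fin a) (j : Fin b), i ≤ i' → A i' j ≤ A i j) ∧
    (∀ (i : Fin a) (h : (i : ℕ) < b), 0 < A i ⟨i, h⟩)

/-- Binomial coefficient with integer top argument, with the convention that it vanishes
whenever the top argument is negative or smaller than the bottom one. -/
def ch (a : ℤ) (b : ℕ) : ℤ := if a < 0 then 0 else (a.toNat).choose b

/-- `h : ℕ → ℤ` is a pure O-sequence: it is the f-vector (counting monomials by degree)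
of a nonempty finite order ideal of monomials all of whose maximal elements have the
same degree. -/
def IsPureOSequence (h : ℕ → ℤ) : Prop :=
  ∃ (N : ℕ) (Γ : Finset (Fin N → ℕ)),
    Γ.Nonempty ∧
      (∀ μ ∈ Γ, ∀ ν : Fin N → ℕ, ν ≤ μ → ν ∈ Γ) ∧
      (∃ d : ℕ, ∀ μ ∈ Γ, (∀ ν ∈ Γ, μ ≤ ν → μ = ν) → ∑ j, μ j = d) ∧
      (∀ i : ℕ, ((Γ.filter fun μ => ∑ j, μ j = i).card : ℤ) = h i)

/-!
Expanding `hp^A` along the bottom-right entry `a = a_{t,m}` gives `z^a hp^{A'}` plus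
`(1 + ⋯ + z^(a-1)) hp^{A''}`, where `A'` drops the last row and column and `A''` the last column.
By induction on the number of columns both terms have positive leading coefficients, and their
degrees differ by exactly `a_{0,0} - a_{t,0} ≥ 0`, the amount by which the last row falls short
of the first, so nothing cancels. If the last row is not among the `r` maximal ones, the first
term alone carries the leading coefficient `binom(r-1+c, c)`; otherwise all rows are equal and the
two binomial coefficients of the terms add up by Pascal's rule.
-/

section PolynomialAdd

variable {R : Type*} [Semiring R] {p q : R[X]}

theorem natDegree_add_of_natDegree_eq (h : p.natDegree = q.natDegree)
    (hlc : p.leadingCoeff + q.leadingCoeff ≠ 0) : (p + q).natDegree = p.natDegree := by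
  refine natDegree_eq_of_le_of_coeff_ne_zero ?_ ?_
  · exact (natDegree_add_le p q).trans (by rw [h, max_self])
  · simpa only [coeff_add, leadingCoeff, h] using hlc

theorem leadingCoeff_add_of_natDegree_eq (h : p.natDegree = q.natDegree)
    (hlc : p.leadingCoeff + q.leadingCoeff ≠ 0) :
    (p + q).leadingCoeff = p.leadingCoeff + q.leadingCoeff := by
  simp only [leadingCoeff, natDegree_add_of_natDegree_eq h hlc, coeff_add, h]

theorem natDegree_add_and_leadingCoeff_pos_of_natDegree_le [PartialOrder R]
    [IsOrderedCancelAddMonoid R] (h : q.natDegree ≤ p.natDegree) (hp : 0 < p.leadingCoeff)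
    (hq : 0 < q.leadingCoeff) : (p + q).natDegree = p.natDegree ∧ 0 < (p + q).leadingCoeff := by
  rcases h.lt_or_eq with hlt | heq
  · rw [natDegree_add_eq_left_of_natDegree_lt hlt,
      leadingCoeff_add_of_degree_lt' (degree_lt_degree hlt)]
    exact ⟨rfl, hp⟩
  · have hlc : p.leadingCoeff + q.leadingCoeff ≠ 0 := (add_pos hp hq).ne'
    rw [natDegree_add_of_natDegree_eq heq.symm hlc, leadingCoeff_add_of_natDegree_eq heq.symm hlc]
    exact ⟨rfl, add_pos hp hq⟩

end PolynomialAdd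

theorem geom_monic {d : ℤ} (hd : 1 ≤ d) : (geom d).Monic :=
  monic_geom_sum_X (by omega)

theorem natDegree_geom {d : ℤ} (hd : 1 ≤ d) : ((geom d).natDegree : ℤ) = d - 1 := by
  obtain ⟨n, hn⟩ : ∃ n : ℕ, d.toNat = n + 1 := ⟨d.toNat - 1, by omega⟩
  have hdeg : (geom d).natDegree = n := by
    refine natDegree_eq_of_le_of_coeff_ne_zero ?_ ?_
    · refine natDegree_sum_le_of_forall_le _ _ fun i hi => ?_
      rw [natDegree_X_pow]
      rw [hn, Finset.mem_range] at hi
      omega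
    · simp [geom, finsetSum_coeff, coeff_X_pow, hn]
  omega

theorem natDegree_geom_lt_natDegree_X_pow_mul {d : ℤ} (hd : 1 ≤ d) {p : ℤ[X]} (hp : p ≠ 0) :
    (geom d).natDegree < (X ^ d.toNat * p).natDegree := by
  have := natDegree_geom hd
  rw [(monic_X_pow _).natDegree_mul' hp, natDegree_X_pow]
  omega

namespace IsDegreeMatrix

variable {a b : ℕ} {A : Matrix (Fin a) (Fin b) ℤ}

theorem sub_eq_sub (hA : IsDegreeMatrix A) (i i' : Fin a) (j j' : Fin b) :
    A i j - A i' j = A i j' - A i' j' := by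
  obtain ⟨⟨α, β, hαβ⟩, -⟩ := hA
  simp only [hαβ]
  ring

theorem pos_of_le (hA : IsDegreeMatrix A) {i : Fin a} {j : Fin b} (hij : (i : ℕ) ≤ j) :
    0 < A i j :=
  (hA.2.2.2 i (hij.trans_lt j.isLt)).trans_le (hA.2.1 i _ j hij)

theorem submatrix (hA : IsDegreeMatrix A) {a' b' : ℕ} {f : Fin a' → Fin a}
    {g : Fin b' → Fin b} (hf : Monotone f) (hg : Monotone g)
    (hfg : ∀ (i : Fin a') (h : (i : ℕ) < b'), (f i : ℕ) ≤ g ⟨i, h⟩) :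
    IsDegreeMatrix (A.submatrix f g) := by
  obtain ⟨α, β, hαβ⟩ := hA.1
  exact ⟨⟨α ∘ f, β ∘ g, fun i j => hαβ _ _⟩, fun i j j' h => hA.2.1 _ _ _ (hg h),
    fun i i' j h => hA.2.2.1 _ _ _ (hf h), fun i h => hA.pos_of_le (hfg i h)⟩

theorem submatrix_castSucc_castSucc {A : Matrix (Fin (a + 1)) (Fin (b + 1)) ℤ}
    (hA : IsDegreeMatrix A) : IsDegreeMatrix (A.submatrix Fin.castSucc Fin.castSucc) :=
  hA.submatrix Fin.strictMono_castSucc.monotone Fin.strictMono_castSucc.monotone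
    fun _ _ => le_rfl

theorem submatrix_id_castSucc {A : Matrix (Fin a) (Fin (b + 1)) ℤ} (hA : IsDegreeMatrix A) :
    IsDegreeMatrix (A.submatrix id Fin.castSucc) :=
  hA.submatrix monotone_id Fin.strictMono_castSucc.monotone fun _ _ => le_rfl

end IsDegreeMatrix

theorem hp_zero_left (m : ℕ) (A : Matrix (Fin 0) (Fin m) ℤ) : hp 0 m A = 0 := by
  rw [hp]

theorem hp_succ_self (t : ℕ) (A : Matrix (Fin (t + 1)) (Fin t) ℤ) : hp (t + 1) t A = 1 := by
  cases t with
  | zero => rw [hp]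
  | succ t => rw [hp, if_pos (by omega)]

theorem hp_succ_succ {t m : ℕ} (h : t ≤ m) (A : Matrix (Fin (t + 1)) (Fin (m + 1)) ℤ) :
    hp (t + 1) (m + 1) A =
      X ^ (A (Fin.last t) (Fin.last m)).toNat * hp t m (A.submatrix Fin.castSucc Fin.castSucc) +
        geom (A (Fin.last t) (Fin.last m)) * hp (t + 1) m (A.submatrix id Fin.castSucc) := by
  rw [hp, if_neg (by omega)]
  rfl

theorem hp_one (m : ℕ) (A : Matrix (Fin 1) (Fin m) ℤ) : hp 1 m A = ∏ j, geom (A 0 j) := by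
  induction m with
  | zero => exact hp_succ_self 0 A
  | succ m ih =>
    rw [hp_succ_succ (Nat.zero_le m), hp_zero_left, mul_zero, zero_add, ih,
      Fin.prod_univ_castSucc, mul_comm]
    rfl

theorem monic_hp_one {m : ℕ} {A : Matrix (Fin 1) (Fin m) ℤ} (hA : IsDegreeMatrix A) :
    (hp 1 m A).Monic := by
  rw [hp_one]
  exact monic_prod_of_monic _ _ fun j _ => geom_monic (hA.pos_of_le (Nat.zero_le _))

theorem monic_hp_self {t : ℕ} {A : Matrix (Fin (t + 1)) (Fin (t + 1)) ℤ}
    (hA : IsDegreeMatrix A) :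
    (hp (t + 1) (t + 1) A).Monic := by
  induction t with
  | zero => exact monic_hp_one hA
  | succ s ih =>
    have ha : 1 ≤ A (Fin.last _) (Fin.last _) := hA.pos_of_le le_rfl
    have hmonic' := ih hA.submatrix_castSucc_castSucc
    rw [hp_succ_succ le_rfl, hp_succ_self, mul_one]
    exact ((monic_X_pow _).mul hmonic').add_of_left
      (degree_lt_degree (natDegree_geom_lt_natDegree_X_pow_mul ha hmonic'.ne_zero))

/-- Since `a_{i,j} = a_{0,j} - (a_{0,0} - a_{i,0})`, this is
`t + ∑_{j ≤ t} (a_{j,j} - 1) + ∑_{j > t} (a_{0,j} - 1)`. -/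
def hpDegree {t m : ℕ} (A : Matrix (Fin (t + 1)) (Fin (m + 1)) ℤ) : ℤ :=
  t + ∑ j, (A 0 j - 1) - ∑ i, (A 0 0 - A i 0)

theorem hpDegree_eq_submatrix_id_castSucc {t m : ℕ} (A : Matrix (Fin (t + 1)) (Fin (m + 2)) ℤ) :
    hpDegree A = hpDegree (A.submatrix id Fin.castSucc) + A 0 (Fin.last (m + 1)) - 1 := by
  simp only [hpDegree, Fin.sum_univ_castSucc (n := m + 1), Matrix.submatrix_apply, id,
    Fin.castSucc_zero]
  ring

theorem hpDegree_eq_submatrix_castSucc_castSucc {t m : ℕ}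
    {A : Matrix (Fin (t + 2)) (Fin (m + 2)) ℤ} (hA : IsDegreeMatrix A) :
    hpDegree A =
      hpDegree (A.submatrix Fin.castSucc Fin.castSucc) + A (Fin.last _) (Fin.last _) := by
  have := hA.sub_eq_sub (Fin.last _) 0 (Fin.last _) 0
  simp only [hpDegree, Fin.sum_univ_castSucc (n := m + 1), Fin.sum_univ_castSucc (n := t + 1),
    Matrix.submatrix_apply, Fin.castSucc_zero]
  push_cast
  linarith

theorem natDegree_hp_one {m : ℕ} {A : Matrix (Fin 1) (Fin (m + 1)) ℤ} (hA : IsDegreeMatrix A) :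
    ((hp 1 (m + 1) A).natDegree : ℤ) = hpDegree A := by
  rw [hp_one, natDegree_prod_of_monic _ _ fun j _ => geom_monic (hA.pos_of_le (Nat.zero_le _)),
    Nat.cast_sum, show hpDegree A = ∑ j, (A 0 j - 1) by simp [hpDegree]]
  exact Finset.sum_congr rfl fun j _ =>
    natDegree_geom (hA.pos_of_le (i := 0) (j := j) (Nat.zero_le _))

section Expansion

variable {s m : ℕ} {A : Matrix (Fin (s + 1 + 1)) (Fin (m + 1 + 1)) ℤ}

theorem natDegree_X_pow_mul_hp (hA : IsDegreeMatrix A) (hsm : s ≤ m)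
    (hne : hp (s + 1) (m + 1) (A.submatrix Fin.castSucc Fin.castSucc) ≠ 0)
    (hdeg : ((hp (s + 1) (m + 1) (A.submatrix Fin.castSucc Fin.castSucc)).natDegree : ℤ) =
      hpDegree (A.submatrix Fin.castSucc Fin.castSucc)) :
    ((X ^ (A (Fin.last _) (Fin.last _)).toNat *
      hp (s + 1) (m + 1) (A.submatrix Fin.castSucc Fin.castSucc)).natDegree : ℤ) =
        hpDegree A := by
  have ha : 0 < A (Fin.last _) (Fin.last _) := hA.pos_of_le (by simpa using hsm)
  rw [(monic_X_pow _).natDegree_mul' hne, natDegree_X_pow, Nat.cast_add, hdeg,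
    hpDegree_eq_submatrix_castSucc_castSucc hA]
  omega

theorem natDegree_geom_mul_hp (hA : IsDegreeMatrix A) (hsm : s ≤ m)
    (hne : hp (s + 1 + 1) (m + 1) (A.submatrix id Fin.castSucc) ≠ 0)
    (hdeg : ((hp (s + 1 + 1) (m + 1) (A.submatrix id Fin.castSucc)).natDegree : ℤ) =
      hpDegree (A.submatrix id Fin.castSucc)) :
    ((geom (A (Fin.last _) (Fin.last _)) *
      hp (s + 1 + 1) (m + 1) (A.submatrix id Fin.castSucc)).natDegree : ℤ) =
        hpDegree A - (A 0 0 - A (Fin.last _) 0) := by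
  have ha : 1 ≤ A (Fin.last _) (Fin.last _) := hA.pos_of_le (by simpa using hsm)
  have := hA.sub_eq_sub 0 (Fin.last _) (Fin.last (m + 1)) 0
  rw [(geom_monic ha).natDegree_mul' hne, Nat.cast_add, natDegree_geom ha, hdeg,
    hpDegree_eq_submatrix_id_castSucc A]
  linarith

end Expansion

theorem natDegree_hp_and_leadingCoeff_pos {t m : ℕ} {A : Matrix (Fin (t + 1)) (Fin (m + 1)) ℤ}
    (hA : IsDegreeMatrix A) (htm : t ≤ m) :
    ((hp (t + 1) (m + 1) A).natDegree : ℤ) = hpDegree A ∧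
      0 < (hp (t + 1) (m + 1) A).leadingCoeff := by
  induction m generalizing t with
  | zero =>
    obtain rfl : t = 0 := by omega
    exact ⟨natDegree_hp_one hA, (monic_hp_one hA).leadingCoeff ▸ one_pos⟩
  | succ m ih =>
  cases t with
  | zero => exact ⟨natDegree_hp_one hA, (monic_hp_one hA).leadingCoeff ▸ one_pos⟩
  | succ s =>
  have ha : 1 ≤ A (Fin.last _) (Fin.last _) := hA.pos_of_le (by simpa using htm)
  obtain ⟨hdeg', hpos'⟩ := ih hA.submatrix_castSucc_castSucc (by omega)
  have hne' := leadingCoeff_ne_zero.mp hpos'.ne'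
  have hP := natDegree_X_pow_mul_hp hA (by omega) hne' hdeg'
  rw [hp_succ_succ htm]
  set P := X ^ (A (Fin.last _) (Fin.last _)).toNat *
    hp (s + 1) (m + 1) (A.submatrix Fin.castSucc Fin.castSucc)
  set Q := geom (A (Fin.last _) (Fin.last _)) * hp (s + 1 + 1) (m + 1) (A.submatrix id Fin.castSucc)
  have hPpos : 0 < P.leadingCoeff := by rwa [leadingCoeff_monic_mul (monic_X_pow _)]
  suffices hQ : Q.natDegree ≤ P.natDegree ∧ 0 < Q.leadingCoeff by
    obtain ⟨hdeg, hpos⟩ := natDegree_add_and_leadingCoeff_pos_of_natDegree_le hQ.1 hPpos hQ.2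
    exact ⟨hdeg ▸ hP, hpos⟩
  rcases (show m = s ∨ s < m by omega) with rfl | hsm
  · have hQ : Q = geom (A (Fin.last _) (Fin.last _)) := by simp only [Q, hp_succ_self, mul_one]
    rw [hQ, (geom_monic ha).leadingCoeff]
    exact ⟨(natDegree_geom_lt_natDegree_X_pow_mul ha hne').le, one_pos⟩
  obtain ⟨hdeg'', hpos''⟩ := ih hA.submatrix_id_castSucc (by omega)
  have hQ : (Q.natDegree : ℤ) = hpDegree A - (A 0 0 - A (Fin.last _) 0) :=
    natDegree_geom_mul_hp hA (by omega) (leadingCoeff_ne_zero.mp hpos''.ne') hdeg''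
  have hrows : A (Fin.last _) 0 ≤ A 0 0 := hA.2.2.1 _ _ _ (Fin.zero_le _)
  refine ⟨by omega, ?_⟩
  rwa [leadingCoeff_monic_mul (geom_monic ha)]

theorem natDegree_X_pow_mul_hp_eq_natDegree_geom_mul_hp_add {s m : ℕ}
    {A : Matrix (Fin (s + 1 + 1)) (Fin (m + 1 + 1)) ℤ} (hA : IsDegreeMatrix A) (hsm : s < m) :
    ((X ^ (A (Fin.last _) (Fin.last _)).toNat *
      hp (s + 1) (m + 1) (A.submatrix Fin.castSucc Fin.castSucc)).natDegree : ℤ) =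
      (geom (A (Fin.last _) (Fin.last _)) *
        hp (s + 1 + 1) (m + 1) (A.submatrix id Fin.castSucc)).natDegree +
      (A 0 0 - A (Fin.last _) 0) := by
  obtain ⟨hdeg', hpos'⟩ :=
    natDegree_hp_and_leadingCoeff_pos hA.submatrix_castSucc_castSucc hsm.le
  obtain ⟨hdeg'', hpos''⟩ := natDegree_hp_and_leadingCoeff_pos hA.submatrix_id_castSucc hsm
  rw [natDegree_X_pow_mul_hp hA hsm.le (leadingCoeff_ne_zero.mp hpos'.ne') hdeg',
    natDegree_geom_mul_hp hA hsm.le (leadingCoeff_ne_zero.mp hpos''.ne') hdeg'']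
  ring

theorem leadingCoeff_hp {t m c r : ℕ} {A : Matrix (Fin (t + 1)) (Fin (m + 1)) ℤ}
    (hA : IsDegreeMatrix A) (hm : m = t + c) (hrt : r ≤ t + 1)
    (hr : ∀ i, A i 0 = A 0 0 ↔ (i : ℕ) < r) :
    (hp (t + 1) (m + 1) A).leadingCoeff = (r - 1 + c).choose c := by
  have hr0 : 0 < r := (hr 0).mp rfl
  induction m generalizing t c r with
  | zero =>
    obtain ⟨rfl, rfl, rfl⟩ : t = 0 ∧ c = 0 ∧ r = 1 := by omega
    simpa using (monic_hp_one hA).leadingCoeff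
  | succ m ih =>
  cases t with
  | zero =>
    obtain ⟨rfl, rfl⟩ : c = m + 1 ∧ r = 1 := by omega
    simpa using (monic_hp_one hA).leadingCoeff
  | succ s =>
  rcases c with _ | k
  · obtain rfl : m = s := by omega
    simpa using (monic_hp_self hA).leadingCoeff
  have hA' := hA.submatrix_castSucc_castSucc
  have hA'' := hA.submatrix_id_castSucc
  have hlc' := ih hA' (c := k + 1) (r := min r (s + 1)) (by omega) (by omega)
    (fun i => by simpa [Fin.castSucc_zero, hr] using (by omega)) (by omega)
  have hlc'' := ih hA'' (c := k) (by omega) hrt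
    (fun i => by simpa [Fin.castSucc_zero] using hr i) hr0
  have hgap := natDegree_X_pow_mul_hp_eq_natDegree_geom_mul_hp_add hA (by omega)
  have ha : 1 ≤ A (Fin.last _) (Fin.last _) := hA.pos_of_le (by simp [hm])
  rw [hp_succ_succ (by omega)]
  rcases (show r ≤ s + 1 ∨ r = s + 2 by omega) with hrs | rfl
  · have hlast : A (Fin.last _) 0 < A 0 0 :=
      lt_of_le_of_ne (hA.2.2.1 _ _ _ (Fin.zero_le _)) ((hr _).not.mpr (by simpa using hrs))
    rw [leadingCoeff_add_of_degree_lt' (degree_lt_degree (by omega)),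
      leadingCoeff_monic_mul (monic_X_pow _), hlc', min_eq_left hrs]
  · have hlast : A (Fin.last _) 0 = A 0 0 := (hr _).mpr (by simp)
    obtain ⟨-, hpos'⟩ := natDegree_hp_and_leadingCoeff_pos hA' (by omega)
    obtain ⟨-, hpos''⟩ := natDegree_hp_and_leadingCoeff_pos hA'' (by omega)
    rw [leadingCoeff_add_of_natDegree_eq (by omega), leadingCoeff_monic_mul (monic_X_pow _),
      leadingCoeff_monic_mul (geom_monic ha), hlc', hlc'', min_eq_right (by omega)]
    · simp only [Nat.add_sub_add_right _ 1 0, Nat.sub_zero, ← add_assoc, add_right_comm s 1 k,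
        Nat.choose_succ_succ' (s + k + 1) k]
      push_cast
      ring
    · rw [leadingCoeff_monic_mul (monic_X_pow _), leadingCoeff_monic_mul (geom_monic ha)]
      exact (add_pos hpos' hpos'').ne'

theorem hp_leadingCoeff_general (t c r : ℕ) (A : Matrix (Fin (t + 1)) (Fin (t + c + 1)) ℤ)
    (hA : IsDegreeMatrix A) (hrt : r ≤ t + 1)
    (hreq : ∀ i : Fin (t + 1), (i : ℕ) < r → A i 0 = A 0 0)
    (hrmax : ∀ h : r < t + 1, A ⟨r, h⟩ 0 ≠ A 0 0) :
    (hp (t + 1) (t + c + 1) A).leadingCoeff = ((r - 1 + c).choose c : ℤ) := by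
  refine leadingCoeff_hp hA rfl hrt fun i => ⟨fun hi => ?_, hreq i⟩
  by_contra! hri
  have hlt : A i 0 < A 0 0 :=
    (hA.2.2.1 ⟨r, by omega⟩ i 0 hri).trans_lt
      ((hA.2.2.1 0 ⟨r, by omega⟩ 0 (Fin.zero_le _)).lt_of_ne (hrmax (by omega)))
  exact hlt.ne hi

/-- The leading coefficient of the h-polynomial of a degree matrix `A ∈ ℤ^{(t+1)×(t+c+1)}`
(codimension `c+1`) equals `binom(r + (c+1) - 2, (c+1) - 1) = binom(r-1+c, c)`, where
`r` is the number of maximal equal rows, i.e. the largest `r` with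
`a_{1,1} = a_{2,1} = ⋯ = a_{r,1}`. -/
theorem hp_leadingCoeff (t c r : ℕ) (A : Matrix (Fin (t + 1)) (Fin (t + c + 1)) ℤ)
    (hA : IsDegreeMatrix A) (hr1 : 1 ≤ r) (hrt : r ≤ t + 1)
    (hreq : ∀ i : Fin (t + 1), (i : ℕ) < r → A i 0 = A 0 0)
    (hrmax : ∀ h : r < t + 1, A ⟨r, h⟩ 0 ≠ A 0 0) :
    (hp (t + 1) (t + c + 1) A).leadingCoeff = ((r - 1 + c).choose c : ℤ) :=
  hp_leadingCoeff_general t c r A hA hrt hreq hrmax
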